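/- Let G = (V,E) be a hypergraph and let ẑ ∈ P_FR(G). Then all edge lengths ℓ̄ of the auxiliary graph Ḡ constructed from ẑ are nonnegative. -/
import Mathlib


open Finset

namespace BPO

variable {V E : Type} [DecidableEq V]

/-- Building block `s^inc_{e,v}(z) = z_v - z_e`. -/
def sInc (e : E) (v : V) (z : V ⊕ E → ℝ) : ℝ := z (Sum.inl v) - z (Sum.inr e)

/-- Building block `s^odd_{e,U,W}(z)`. -/
def sOdd (G : E → Finset V) (e : E) (U W : Finset V) (z : V ⊕ E → ℝ) : ℝ :=
  2 * z (Sum.inr e) - 1 + ∑ u ∈ U, (1 - z (Sum.inl u)) + ∑ w ∈ W, (1 - z (Sum.inl w))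
    + ∑ v ∈ G e \ (U ∪ W), (2 - 2 * z (Sum.inl v))

/-- Building block `s^one_{e,U,f}(z)`. -/
def sOne (G : E → Finset V) (e : E) (U : Finset V) (f : E) (z : V ⊕ E → ℝ) : ℝ :=
  2 * z (Sum.inr e) - 1 + ∑ u ∈ U, (1 - z (Sum.inl u)) + (1 - z (Sum.inr f))
    + ∑ v ∈ G e \ (U ∪ G f), (2 - 2 * z (Sum.inl v))

/-- Building block `s^two_{e,f,g}(z)`. -/
def sTwo (G : E → Finset V) (e f g : E) (z : V ⊕ E → ℝ) : ℝ :=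
  2 * z (Sum.inr e) - 1 + (1 - z (Sum.inr f)) + (1 - z (Sum.inr g))
    + ∑ v ∈ G e \ (G f ∪ G g), (2 - 2 * z (Sum.inl v))

/-- Membership in the standard relaxation `P_SR(G)`. -/
def memSR (G : E → Finset V) (z : V ⊕ E → ℝ) : Prop :=
  (∀ x, 0 ≤ z x ∧ z x ≤ 1) ∧
  (∀ e : E, ∀ v ∈ G e, z (Sum.inl v) - z (Sum.inr e) ≥ 0) ∧
  (∀ e : E, (z (Sum.inr e) - 1) + ∑ v ∈ G e, (1 - z (Sum.inl v)) ≥ 0)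

/-- Membership in the flower relaxation `P_FR(G)`: standard relaxation plus all
flower inequalities with at most two neighbors. -/
def memFR (G : E → Finset V) (z : V ⊕ E → ℝ) : Prop :=
  memSR G z ∧
  (∀ f e : E, f ≠ e → (G f ∩ G e).Nonempty →
    (z (Sum.inr f) - 1) + (1 - z (Sum.inr e)) + ∑ v ∈ G f \ G e, (1 - z (Sum.inl v)) ≥ 0) ∧
  (∀ f e₁ e₂ : E, f ≠ e₁ → f ≠ e₂ → e₁ ≠ e₂ →
    (G f ∩ G e₁).Nonempty → (G f ∩ G e₂).Nonempty → G f ∩ G e₁ ∩ G e₂ = ∅ →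
    (z (Sum.inr f) - 1) + (1 - z (Sum.inr e₁)) + (1 - z (Sum.inr e₂))
      + ∑ v ∈ G f \ (G e₁ ∪ G e₂), (1 - z (Sum.inl v)) ≥ 0)

/-- The multilinear polytope `P_ML(G)`. -/
def PML (G : E → Finset V) : Set (V ⊕ E → ℝ) :=
  convexHull ℝ { z | (∀ x, z x = 0 ∨ z x = 1) ∧
    ∀ e : E, z (Sum.inr e) = ∏ v ∈ G e, z (Sum.inl v) }

/-- A closed walk of length `k ≥ 3`, with nodes `ve i ∈ G (ed (i-1)) ∩ G (ed i)`
and consecutive triple intersections empty (indices cyclic via `ZMod k`). -/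
def IsClosedWalk (G : E → Finset V) (k : ℕ) (ve : ZMod k → V) (ed : ZMod k → E) : Prop :=
  3 ≤ k ∧ (∀ i, ve i ∈ G (ed (i - 1)) ∩ G (ed i)) ∧
    ∀ i, G (ed (i - 1)) ∩ G (ed i) ∩ G (ed (i + 1)) = ∅

/-- A signature (`true` = `+`, `false` = `-`) is odd if it has an odd number of `-` signs. -/
def OddSig (k : ℕ) [NeZero k] (sg : ZMod k → Bool) : Prop :=
  Odd (Finset.univ.filter fun i : ZMod k => sg i = false).card

/-- The length function `ℓ_{(C,σ)}(z)` of a signed closed walk. -/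
def lenFun (G : E → Finset V) (k : ℕ) [NeZero k] (ve : ZMod k → V) (ed : ZMod k → E)
    (sg : ZMod k → Bool) (z : V ⊕ E → ℝ) : ℝ :=
  (∑ i ∈ Finset.univ.filter
      (fun i : ZMod k => sg (i - 1) = true ∧ sg i = true ∧ sg (i + 1) = true),
      (sInc (ed i) (ve i) z + sInc (ed i) (ve (i + 1)) z))
  + (∑ i ∈ Finset.univ.filter
      (fun i : ZMod k => sg (i - 1) = false ∧ sg i = false ∧ sg (i + 1) = false),
      sOdd G (ed i) (G (ed i) ∩ G (ed (i - 1))) (G (ed i) ∩ G (ed (i + 1))) z)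
  + (∑ i ∈ Finset.univ.filter
      (fun i : ZMod k => sg (i - 1) = true ∧ sg i = true ∧ sg (i + 1) = false),
      sInc (ed i) (ve i) z)
  + (∑ i ∈ Finset.univ.filter
      (fun i : ZMod k => sg (i - 1) = false ∧ sg i = false ∧ sg (i + 1) = true),
      sOne G (ed i) (G (ed i) ∩ G (ed (i - 1))) (ed (i + 1)) z)
  + (∑ i ∈ Finset.univ.filter
      (fun i : ZMod k => sg (i - 1) = false ∧ sg i = true ∧ sg (i + 1) = true),
      sInc (ed i) (ve (i + 1)) z)
  + (∑ i ∈ Finset.univ.filter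
      (fun i : ZMod k => sg (i - 1) = true ∧ sg i = false ∧ sg (i + 1) = false),
      sOne G (ed i) (G (ed i) ∩ G (ed (i + 1))) (ed (i - 1)) z)
  + (∑ i ∈ Finset.univ.filter
      (fun i : ZMod k => sg (i - 1) = true ∧ sg i = false ∧ sg (i + 1) = true),
      sTwo G (ed i) (ed (i - 1)) (ed (i + 1)) z)

/-- The set `T` of potential subsequent edge triples. -/
def Trip (G : E → Finset V) (e f g : E) : Prop :=
  (G e ∩ G f).Nonempty ∧ (G f ∩ G g).Nonempty ∧ G e ∩ G f ∩ G g = ∅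

/-- Nodes of the auxiliary graph: original nodes, intersections, and edges, each signed. -/
inductive AuxNode (V E : Type) : Type
  | vert : V → Bool → AuxNode V E
  | inter : Finset V → Bool → AuxNode V E
  | edge : E → Bool → AuxNode V E

/-- Adjacency in the auxiliary graph `Ḡ`. -/
def auxAdj (G : E → Finset V) : AuxNode V E → AuxNode V E → Prop
  | .vert v p, .edge e q => q = p ∧ v ∈ G e
  | .edge e q, .vert v p => q = p ∧ v ∈ G e
  | .inter U p, .inter W q =>
      q = !p ∧ ∃ e f g, Trip G e f g ∧ U = G e ∩ G f ∧ W = G f ∩ G g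
  | .edge e p, .inter U q => q = !p ∧ ∃ f g, Trip G e f g ∧ U = G f ∩ G g
  | .inter U q, .edge e p => q = !p ∧ ∃ f g, Trip G e f g ∧ U = G f ∩ G g
  | .edge e p, .edge g q => q = !p ∧ ∃ f, Trip G e f g
  | _, _ => False

/-- Edge lengths `ℓ̄` of the auxiliary graph (minimum over all generating triples). -/
noncomputable def auxLen (G : E → Finset V) (z : V ⊕ E → ℝ) :
    AuxNode V E → AuxNode V E → ℝ
  | .vert v _, .edge e _ => sInc e v z
  | .edge e _, .vert v _ => sInc e v z
  | .inter U _, .inter W _ =>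
      sInf { x : ℝ | ∃ e f g, Trip G e f g ∧ U = G e ∩ G f ∧ W = G f ∩ G g
        ∧ x = sOdd G f U W z }
  | .edge e _, .inter U _ =>
      sInf { x : ℝ | ∃ f g, Trip G e f g ∧ U = G f ∩ G g ∧ x = sOne G f U e z }
  | .inter U _, .edge e _ =>
      sInf { x : ℝ | ∃ f g, Trip G e f g ∧ U = G f ∩ G g ∧ x = sOne G f U e z }
  | .edge e _, .edge g _ =>
      sInf { x : ℝ | ∃ f, Trip G e f g ∧ x = sTwo G f e g z }
  | _, _ => 0

/-- Two auxiliary nodes are twins if they differ only in the sign component. -/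
def Twin : AuxNode V E → AuxNode V E → Prop
  | .vert v p, .vert w q => w = v ∧ q = !p
  | .inter U p, .inter W q => W = U ∧ q = !p
  | .edge e p, .edge f q => f = e ∧ q = !p
  | _, _ => False

/-- Total length of a walk (given as the list of visited nodes) in the auxiliary graph. -/
noncomputable def walkLen (G : E → Finset V) (z : V ⊕ E → ℝ) :
    List (AuxNode V E) → ℝ
  | a :: b :: rest => auxLen G z a b + walkLen G z (b :: rest)
  | _ => 0

/-- A twin walk in the auxiliary graph: a walk whose endpoints are twins. -/
def IsTwinWalk (G : E → Finset V) (L : List (AuxNode V E)) : Prop :=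
  L.Chain' (auxAdj G) ∧
  ∃ a b, L.head? = some a ∧ L.getLast? = some b ∧ Twin a b

/-- A cyclically indexed family of (distinct) edges forming a cycle hypergraph. -/
def IsCycleFam (m : ℕ) [NeZero m] (F : ZMod m → Finset V) : Prop :=
  3 ≤ m ∧ Function.Injective F ∧
  (∀ i : ZMod m, (F i ∩ F (i + 1)).Nonempty) ∧
  (∀ i j : ZMod m, j ≠ i - 1 → j ≠ i → j ≠ i + 1 → F i ∩ F j = ∅) ∧
  (m = 3 → F 0 ∩ F 1 ∩ F 2 = ∅)

end BPO

namespace BPO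

variable {V E : Type} [DecidableEq V]

private lemma sum_two_eq (s : Finset V) (z : V ⊕ E → ℝ) :
    ∑ v ∈ s, (2 - 2 * z (Sum.inl v)) = 2 * ∑ v ∈ s, (1 - z (Sum.inl v)) := by
  rw [Finset.mul_sum]; exact Finset.sum_congr rfl fun v _ => by ring

private lemma rest_nonneg (G : E → Finset V) (z : V ⊕ E → ℝ) (hz : memSR G z)
    (s : Finset V) : 0 ≤ ∑ v ∈ s, (1 - z (Sum.inl v)) :=
  Finset.sum_nonneg fun v _ => by have := (hz.1 (Sum.inl v)).2; linarith

/-- Facts extracted from a triple. -/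
lemma trip_facts {G : E → Finset V} {e f g : E} (ht : Trip G e f g) :
    f ≠ e ∧ f ≠ g ∧ e ≠ g ∧ (G f ∩ G e).Nonempty ∧ G f ∩ G e ∩ G g = ∅ ∧
      (G f ∩ G g) ∩ G e = ∅ := by
  obtain ⟨h1, h2, h3⟩ := ht
  have hfe : f ≠ e := by
    intro h
    rw [h] at h2
    have : G e ∩ G e ∩ G g = ∅ := by rw [h] at h3; exact h3
    rw [Finset.inter_self] at this
    exact h2.ne_empty this
  have hfg : f ≠ g := by
    intro h
    rw [h] at h1
    have : G e ∩ G g ∩ G g = ∅ := by rw [h] at h3; exact h3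
    rw [Finset.inter_assoc, Finset.inter_self] at this
    exact h1.ne_empty this
  have heg : e ≠ g := by
    intro h
    rw [h] at h1
    have h3' : G g ∩ G f ∩ G g = ∅ := by rw [h] at h3; exact h3
    have : G g ∩ G f ∩ G g = G g ∩ G f := by
      ext x; simp only [Finset.mem_inter]; tauto
    rw [this] at h3'
    exact h1.ne_empty h3'
  refine ⟨hfe, hfg, heg, by rwa [Finset.inter_comm] at h1, ?_, ?_⟩
  · rw [Finset.inter_comm (G f) (G e)]; exact h3
  · rw [Finset.eq_empty_iff_forall_notMem] at h3 ⊢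
    intro x hx
    exact h3 x (by simp only [Finset.mem_inter] at hx ⊢; tauto)

lemma sOdd_nonneg' (G : E → Finset V) (z : V ⊕ E → ℝ) (hz : memSR G z)
    (f : E) (U W : Finset V) (hU : U ⊆ G f) (hW : W ⊆ G f) (hd : Disjoint U W) :
    0 ≤ sOdd G f U W z := by
  have hedge := hz.2.2 f
  have hsplit : ∑ v ∈ G f \ (U ∪ W), (1 - z (Sum.inl v)) + ∑ v ∈ U ∪ W, (1 - z (Sum.inl v))
      = ∑ v ∈ G f, (1 - z (Sum.inl v)) :=
    Finset.sum_sdiff (Finset.union_subset hU hW)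
  have hUW : ∑ v ∈ U ∪ W, (1 - z (Sum.inl v))
      = ∑ v ∈ U, (1 - z (Sum.inl v)) + ∑ v ∈ W, (1 - z (Sum.inl v)) :=
    Finset.sum_union hd
  have hrest := rest_nonneg G z hz (G f \ (U ∪ W))
  have hzf := (hz.1 (Sum.inr f)).1
  unfold sOdd
  rw [sum_two_eq]
  linarith

lemma sOne_nonneg' (G : E → Finset V) (z : V ⊕ E → ℝ) (hz : memFR G z)
    (f e : E) (U : Finset V) (hne : f ≠ e) (hnon : (G f ∩ G e).Nonempty)
    (hU : U ⊆ G f) (hd : U ∩ G e = ∅) :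
    0 ≤ sOne G f U e z := by
  have hflower := hz.2.1 f e hne hnon
  have hUsub : U ⊆ G f \ G e := by
    intro x hx
    rw [Finset.mem_sdiff]
    refine ⟨hU hx, fun hxe => ?_⟩
    have hmem : x ∈ U ∩ G e := Finset.mem_inter.2 ⟨hx, hxe⟩
    rw [hd] at hmem
    exact absurd hmem (Finset.notMem_empty x)
  have heq : G f \ (U ∪ G e) = (G f \ G e) \ U := by
    ext x; simp only [Finset.mem_sdiff, Finset.mem_union]; tauto
  have hsplit : ∑ v ∈ (G f \ G e) \ U, (1 - z (Sum.inl v)) + ∑ v ∈ U, (1 - z (Sum.inl v))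
      = ∑ v ∈ G f \ G e, (1 - z (Sum.inl v)) := Finset.sum_sdiff hUsub
  have hrest := rest_nonneg G z hz.1 ((G f \ G e) \ U)
  have hzf := (hz.1.1 (Sum.inr f)).1
  unfold sOne
  rw [sum_two_eq, heq]
  linarith

lemma sTwo_trip_nonneg (G : E → Finset V) (z : V ⊕ E → ℝ) (hz : memFR G z)
    (e f g : E) (ht : Trip G e f g) : 0 ≤ sTwo G f e g z := by
  obtain ⟨hfe, hfg, heg, hnon1, hemp, -⟩ := trip_facts ht
  have hflower := hz.2.2 f e g hfe hfg heg hnon1 ht.2.1 hemp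
  have hrest := rest_nonneg G z hz.1 (G f \ (G e ∪ G g))
  have hzf := (hz.1.1 (Sum.inr f)).1
  unfold sTwo
  rw [sum_two_eq]
  linarith

end BPO

/-- all edge lengths of the auxiliary graph built from `ẑ ∈ P_FR(G)`
are nonnegative. -/
theorem auxLen_nonneg {V E : Type} [DecidableEq V] [Fintype V] [Fintype E]
    (G : E → Finset V) (zhat : V ⊕ E → ℝ) (hz : BPO.memFR G zhat) :
    ∀ a b : BPO.AuxNode V E, BPO.auxAdj G a b → 0 ≤ BPO.auxLen G zhat a b := by
  intro a b hab
  cases a <;> cases b <;> simp only [BPO.auxAdj] at hab <;> try exact hab.elim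
  case vert.edge v p e q =>
    exact hz.1.2.1 e v hab.2
  case edge.vert e q v p =>
    exact hz.1.2.1 e v hab.2
  case inter.inter U p W q =>
    apply Real.sInf_nonneg
    rintro x ⟨e, f, g, ht, rfl, rfl, rfl⟩
    refine BPO.sOdd_nonneg' G zhat hz.1 f _ _ Finset.inter_subset_right
      Finset.inter_subset_left ?_
    rw [Finset.disjoint_left]
    intro x hx1 hx2
    have : x ∈ G e ∩ G f ∩ G g :=
      Finset.mem_inter.2 ⟨hx1, (Finset.mem_inter.1 hx2).2⟩
    rw [ht.2.2] at this
    exact absurd this (Finset.notMem_empty x)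
  case edge.inter e p U q =>
    apply Real.sInf_nonneg
    rintro x ⟨f, g, ht, rfl, rfl⟩
    obtain ⟨hfe, -, -, hnon1, -, hd⟩ := BPO.trip_facts ht
    exact BPO.sOne_nonneg' G zhat hz f e _ hfe hnon1 Finset.inter_subset_left hd
  case inter.edge U q e p =>
    apply Real.sInf_nonneg
    rintro x ⟨f, g, ht, rfl, rfl⟩
    obtain ⟨hfe, -, -, hnon1, -, hd⟩ := BPO.trip_facts ht
    exact BPO.sOne_nonneg' G zhat hz f e _ hfe hnon1 Finset.inter_subset_left hd
  case edge.edge e p g q =>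
    apply Real.sInf_nonneg
    rintro x ⟨f, ht, rfl⟩
    exact BPO.sTwo_trip_nonneg G zhat hz e f g ht
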